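/- (Elliptic partial fraction expansion) Let 0 < |p| < 1, let n ≥ 1, and let a₁,…,a_n, b₁,…,b_{n+1}, t be nonzero complex numbers subject to the balancing condition a₁⋯a_n · t = b₁⋯b_{n+1}, and assume a_i/t ∉ p^ℤ for all i, a_i/a_s ∉ p^ℤ for i ≠ s, and b_{n+1}/t ∉ p^ℤ. Then ∏_{s=1}^n θ_p(b_s/t)/θ_p(a_s/t) = (1/θ_p(b_{n+1}/t)) · ∑_{i=1}^n [ θ_p(a_i/b_{n+1})/θ_p(a_i/t) ] · [ ∏_{s=1}^n θ_p(a_i/b_s) ] / [ ∏_{s=1, s≠i}^n θ_p(a_i/a_s) ]. -/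

import Mathlib

open Complex Finset

/-- The infinite `q`-Pochhammer symbol `(x; p)_∞ = ∏_{n≥0} (1 − x pⁿ)`. -/
noncomputable def pochInf (p x : ℂ) : ℂ := ∏' n : ℕ, (1 - x * p ^ n)

/-- Jacobi's odd theta function `θ_p(x) = (x; p)_∞ (p/x; p)_∞`. -/
noncomputable def theta (p x : ℂ) : ℂ := pochInf p x * pochInf p (p / x)

/-!
Put `c = b_{n+1}/t` and regard `t` as a variable `u ∈ ℂˣ`. Multiplying the difference of the two
sides by `θ_p(c) D(u)`, where `D(u) = ∏_s θ_p(a_s/u)`, gives a holomorphic function `F(u)`.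
By `θ_p(x/p) = -(x/p) θ_p(x)` and the balancing condition, `F(pu) = m(u) F(u)` and
`D(pu) = c m(u) D(u)` with the same factor `m(u)`. Using `θ_p(1/x) = -x⁻¹ θ_p(x)` one checks
`F(a_i) = 0`, so `F` vanishes at all zeros `a_i p^k` of `D`, which are simple. Hence `F/D`
extends to a holomorphic `G` on `ℂˣ` with `G(pu) = c⁻¹ G(u)`, and such a function vanishes
when `c ∉ p^ℤ`: after multiplying by a power of `u` the multiplier has modulus at most `1`, so
`G` is bounded near `0`, extends to an entire function, and `G(pu) = c⁻¹ G(u)` forces all its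
Taylor coefficients at `0` to vanish.
-/

open Filter Topology Metric

section

variable {p : ℂ}

lemma summable_norm_mul_pow (hp : ‖p‖ < 1) (x : ℂ) : Summable fun n : ℕ => ‖x * p ^ n‖ := by
  simpa [norm_mul, norm_pow] using
    (summable_geometric_of_lt_one (norm_nonneg p) hp).mul_left ‖x‖

lemma multipliable_one_sub_mul_pow (hp : ‖p‖ < 1) (x : ℂ) :
    Multipliable fun n : ℕ => 1 - x * p ^ n := by
  simpa [sub_eq_add_neg] using
    multipliable_one_add_of_summable (f := fun n => -(x * p ^ n))
      (by simpa using summable_norm_mul_pow hp x)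

lemma pochInf_ne_zero (hp : ‖p‖ < 1) {x : ℂ} (h : ∀ n : ℕ, x * p ^ n ≠ 1) :
    pochInf p x ≠ 0 := by
  simpa [pochInf, sub_eq_add_neg] using
    tprod_one_add_ne_zero_of_summable (f := fun n => -(x * p ^ n))
      (fun n => by rw [← sub_eq_add_neg, sub_ne_zero]; exact (h n).symm)
      (by simpa using summable_norm_mul_pow hp x)

lemma pochInf_eq_zero {x : ℂ} {n : ℕ} (h : x * p ^ n = 1) : pochInf p x = 0 :=
  tprod_of_exists_eq_zero ⟨n, by simp [h]⟩

lemma pochInf_eq_one_sub_mul (hp : ‖p‖ < 1) (x : ℂ) :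
    pochInf p x = (1 - x) * pochInf p (p * x) := by
  have hshift : ∀ n : ℕ, 1 - x * p ^ (n + 1) = 1 - p * x * p ^ n := fun n => by ring
  rw [pochInf, tprod_eq_zero_mul' (by simpa only [hshift] using multipliable_one_sub_mul_pow hp _),
    pochInf, pow_zero, mul_one]
  simp only [hshift]

lemma differentiable_pochInf (hp : ‖p‖ < 1) : Differentiable ℂ (pochInf p) := by
  intro x
  have hprod := ((summable_geometric_of_lt_one (norm_nonneg p) hp).mul_left (‖x‖ + 1)
    ).hasProdLocallyUniformlyOn_nat_one_add (f := fun n y => -(y * p ^ n)) isOpen_ball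
    (Eventually.of_forall fun n y hy => by
      rw [norm_neg, norm_mul, norm_pow]
      gcongr
      exact (mem_ball_zero_iff.mp hy).le)
    (fun n => by fun_prop)
  have hdiff := hprod.tendstoLocallyUniformlyOn_finsetRange.differentiableOn
    (Eventually.of_forall fun N => by fun_prop) isOpen_ball
  simp only [← sub_eq_add_neg] at hdiff
  exact hdiff.differentiableAt (isOpen_ball.mem_nhds (by simp))

lemma theta_zpow_eq_zero (hp0 : p ≠ 0) (k : ℤ) : theta p (p ^ k) = 0 := by
  rcases le_or_gt k 0 with hk | hk
  · lift -k to ℕ using neg_nonneg.mpr hk with n hn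
    refine mul_eq_zero_of_left (pochInf_eq_zero (n := n) ?_) _
    rw [← zpow_natCast, hn, ← zpow_add₀ hp0, add_neg_cancel, zpow_zero]
  · lift k - 1 to ℕ using by omega with n hn
    refine mul_eq_zero_of_right _ (pochInf_eq_zero (n := n) ?_)
    rw [← zpow_natCast, hn, zpow_sub_one₀ hp0]
    field_simp

lemma theta_ne_zero (hp : ‖p‖ < 1) (hp0 : p ≠ 0) {x : ℂ} (hx : x ≠ 0)
    (h : ∀ k : ℤ, x ≠ p ^ k) : theta p x ≠ 0 := by
  refine mul_ne_zero (pochInf_ne_zero hp fun n hn => h (-n) ?_)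
    (pochInf_ne_zero hp fun n hn => h (n + 1) ?_)
  · rw [zpow_neg, zpow_natCast]
    exact eq_inv_of_mul_eq_one_left hn
  · rw [zpow_add_one₀ hp0, zpow_natCast]
    field_simp at hn
    linear_combination -hn

lemma theta_p_mul (hp : ‖p‖ < 1) (hp0 : p ≠ 0) {x : ℂ} (hx : x ≠ 0) :
    theta p (p * x) = -x⁻¹ * theta p x := by
  rw [theta, theta, pochInf_eq_one_sub_mul hp x, pochInf_eq_one_sub_mul hp (p / (p * x)),
    show p * (p / (p * x)) = p / x by field_simp]
  field_simp
  ring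

lemma theta_div_p (hp : ‖p‖ < 1) (hp0 : p ≠ 0) {x : ℂ} (hx : x ≠ 0) :
    theta p (x / p) = -(x / p) * theta p x := by
  have h := theta_p_mul hp hp0 (div_ne_zero hx hp0)
  rw [mul_div_cancel₀ x hp0] at h
  rw [h, ← mul_assoc, neg_mul_neg, mul_inv_cancel₀ (div_ne_zero hx hp0), one_mul]

lemma theta_inv (hp : ‖p‖ < 1) {x : ℂ} (hx : x ≠ 0) : theta p x⁻¹ = -x⁻¹ * theta p x := by
  rw [theta, theta, pochInf_eq_one_sub_mul hp x, pochInf_eq_one_sub_mul hp x⁻¹, div_inv_eq_mul,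
    ← div_eq_mul_inv]
  field_simp
  ring

lemma differentiableAt_theta (hp : ‖p‖ < 1) {x : ℂ} (hx : x ≠ 0) :
    DifferentiableAt ℂ (theta p) x :=
  (differentiable_pochInf hp x).mul
    ((differentiable_pochInf hp _).comp x ((differentiableAt_inv hx).const_mul p))

lemma differentiableAt_theta_div (hp : ‖p‖ < 1) {y u : ℂ} (hy : y ≠ 0) (hu : u ≠ 0) :
    DifferentiableAt ℂ (fun v => theta p (y / v)) u :=
  (differentiableAt_theta hp (div_ne_zero hy hu)).comp u ((differentiableAt_inv hu).const_mul y)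

lemma deriv_theta_one_ne_zero (hp : ‖p‖ < 1) : deriv (theta p) 1 ≠ 0 := by
  set ψ : ℂ → ℂ := fun x => pochInf p (p * x) * pochInf p (p / x)
  have hθ : theta p = fun x => (1 - x) * ψ x := by
    ext x
    rw [theta, pochInf_eq_one_sub_mul hp x, mul_assoc]
  have hψ : DifferentiableAt ℂ ψ 1 := by
    have := differentiable_pochInf hp
    fun_prop (disch := norm_num)
  have hpp : pochInf p p ≠ 0 := pochInf_ne_zero hp fun n h => by
    have := congrArg norm h
    rw [← pow_succ', norm_pow, norm_one] at this
    exact (pow_lt_one₀ (norm_nonneg p) hp n.succ_ne_zero).ne this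
  rw [hθ, (((hasDerivAt_id' 1).const_sub 1).fun_mul hψ.hasDerivAt).deriv]
  simpa [ψ] using hpp

lemma deriv_theta_p_mul (hp : ‖p‖ < 1) (hp0 : p ≠ 0) {x : ℂ} (hx : x ≠ 0)
    (hθ : theta p x = 0) : deriv (theta p) (p * x) * p = -x⁻¹ * deriv (theta p) x := by
  have hfun : (fun y => theta p (p * y)) =ᶠ[𝓝 x] fun y => -y⁻¹ * theta p y :=
    (eventually_ne_nhds hx).mono fun y hy => theta_p_mul hp hp0 hy
  have hl := (differentiableAt_theta hp (mul_ne_zero hp0 hx)).hasDerivAt.comp x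
    ((hasDerivAt_id x).const_mul p)
  have hr := (hasDerivAt_inv hx).neg.mul (differentiableAt_theta hp hx).hasDerivAt
  simp only [mul_one] at hl
  rw [hθ] at hr
  simpa using (hl.congr_of_eventuallyEq hfun.symm).unique hr

lemma deriv_theta_zpow_ne_zero (hp : ‖p‖ < 1) (hp0 : p ≠ 0) (k : ℤ) :
    deriv (theta p) (p ^ k) ≠ 0 := by
  induction k using Int.induction_on with
  | zero => simpa using deriv_theta_one_ne_zero hp
  | succ k ih =>
    have h := deriv_theta_p_mul hp hp0 (zpow_ne_zero k hp0) (theta_zpow_eq_zero hp0 k)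
    rw [← zpow_one_add₀ hp0, add_comm] at h
    intro h0
    rw [h0, zero_mul, eq_comm, mul_eq_zero] at h
    exact h.elim (by simpa using zpow_ne_zero k hp0) ih
  | pred k ih =>
    have h := deriv_theta_p_mul hp hp0 (zpow_ne_zero (-k - 1) hp0) (theta_zpow_eq_zero hp0 _)
    rw [← zpow_one_add₀ hp0, add_sub_cancel] at h
    intro h0
    rw [h0, mul_zero, mul_eq_zero] at h
    exact h.elim ih hp0

lemma Differentiable.eq_zero_of_comp_mul_eq {c : ℂ} (hc : ∀ m : ℕ, c ≠ p ^ m) {g : ℂ → ℂ}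
    (hg : Differentiable ℂ g) (h : ∀ x, g (p * x) = c * g x) : g = 0 := by
  have hder : ∀ m, iteratedDeriv m g 0 = 0 := fun m => by
    have hm := congrFun (iteratedDeriv_comp_const_mul (n := m) hg.contDiff p) 0
    simp only [h, iteratedDeriv_const_mul_field, mul_zero] at hm
    exact (mul_eq_mul_right_iff.mp hm).resolve_left (hc m)
  ext z
  rw [← Complex.taylorSeries_eq_of_entire' 0 z hg]
  simp [hder]

lemma bddAbove_norm_of_comp_mul_eq (hp0 : p ≠ 0) (hp : ‖p‖ < 1) {c : ℂ} (hc : ‖c‖ ≤ 1) {G : ℂ → ℂ}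
    (hG : ContinuousOn G {0}ᶜ) (h : ∀ u ≠ 0, G (p * u) = c * G u) :
    BddAbove (norm ∘ G '' (closedBall 0 1 \ {0})) := by
  have hK : IsCompact (closedBall (0 : ℂ) 1 ∩ {u | ‖p‖ ≤ ‖u‖}) :=
    (isCompact_closedBall _ _).inter_right (isClosed_le continuous_const continuous_norm)
  obtain ⟨C, hC⟩ := hK.exists_bound_of_continuousOn (hG.mono fun u hu (h0 : u = 0) => by
    simpa [h0, hp0] using hu.2)
  have hann : ∀ k : ℕ, ∀ u, ‖p‖ ^ (k + 1) ≤ ‖u‖ → ‖u‖ ≤ 1 → ‖G u‖ ≤ C := by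
    intro k
    induction k with
    | zero => exact fun u h1 h2 => hC u ⟨mem_closedBall_zero_iff.mpr h2, by simpa using h1⟩
    | succ k ih =>
      intro u h1 h2
      by_cases hu : ‖p‖ ≤ ‖u‖
      · exact hC u ⟨mem_closedBall_zero_iff.mpr h2, hu⟩
      have hpu : ‖u / p‖ ≤ 1 := by
        rw [norm_div, div_le_one (norm_pos_iff.mpr hp0)]; exact (not_le.mp hu).le
      have hpu' : ‖p‖ ^ (k + 1) ≤ ‖u / p‖ := by
        rwa [norm_div, le_div_iff₀ (norm_pos_iff.mpr hp0), ← pow_succ]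
      have hu0 : u / p ≠ 0 := by
        rintro h0; rw [h0, norm_zero] at hpu'; exact (pow_pos (norm_pos_iff.mpr hp0) _).not_ge hpu'
      rw [← mul_div_cancel₀ u hp0, h _ hu0, norm_mul]
      exact (mul_le_of_le_one_left (norm_nonneg _) hc).trans (ih _ hpu' hpu)
  refine ⟨C, ?_⟩
  rintro _ ⟨u, ⟨hu1, hu0⟩, rfl⟩
  obtain ⟨k, hk⟩ := exists_pow_lt_of_lt_one (norm_pos_iff.mpr hu0) hp
  exact hann k u ((pow_le_pow_of_le_one (norm_nonneg p) hp.le k.le_succ).trans hk.le)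
    (mem_closedBall_zero_iff.mp hu1)

lemma eq_zero_of_comp_mul_eq_of_norm_le_one (hp0 : p ≠ 0) (hp : ‖p‖ < 1) {c : ℂ} (hc1 : ‖c‖ ≤ 1)
    (hc : ∀ m : ℕ, c ≠ p ^ m) {G : ℂ → ℂ} (hG : DifferentiableOn ℂ G {0}ᶜ)
    (h : ∀ u ≠ 0, G (p * u) = c * G u) : ∀ u ≠ 0, G u = 0 := by
  set g := Function.update G 0 (limUnder (𝓝[≠] 0) G)
  have hgG : ∀ u ≠ 0, g u = G u := fun u hu => Function.update_of_ne hu _ _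
  have hg0 : DifferentiableOn ℂ g (closedBall 0 1) :=
    Complex.differentiableOn_update_limUnder_of_bddAbove (closedBall_mem_nhds 0 one_pos)
      (hG.mono fun u hu => hu.2) (bddAbove_norm_of_comp_mul_eq hp0 hp hc1 hG.continuousOn h)
  have hg : Differentiable ℂ g := by
    intro x
    rcases eq_or_ne x 0 with rfl | hx
    · exact hg0.differentiableAt (closedBall_mem_nhds 0 one_pos)
    · refine ((hG.differentiableAt (isOpen_ne.mem_nhds hx)).congr_of_eventuallyEq ?_)
      exact (eventually_ne_nhds hx).mono hgG
  have hgp : (fun x => g (p * x)) = fun x => c * g x :=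
    Continuous.ext_on (dense_compl_singleton 0) (hg.continuous.comp (continuous_const_mul p))
      (hg.continuous.const_mul c) fun u hu => by
      simp only [hgG _ (mul_ne_zero hp0 hu), hgG u hu, h u hu]
  intro u hu
  rw [← hgG u hu, hg.eq_zero_of_comp_mul_eq hc (congrFun hgp), Pi.zero_apply]

lemma eq_zero_of_comp_mul_eq (hp0 : p ≠ 0) (hp : ‖p‖ < 1) {c : ℂ} (hc : ∀ k : ℤ, c ≠ p ^ k)
    {G : ℂ → ℂ} (hG : DifferentiableOn ℂ G {0}ᶜ) (h : ∀ u ≠ 0, G (p * u) = c * G u) :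
    ∀ u ≠ 0, G u = 0 := by
  obtain ⟨m, hm⟩ := exists_pow_lt_of_lt_one (inv_pos.mpr (by positivity : 0 < ‖c‖ + 1)) hp
  have hc1 : ‖p ^ m * c‖ ≤ 1 := by
    rw [norm_mul, norm_pow]
    calc ‖p‖ ^ m * ‖c‖ ≤ ‖p‖ ^ m * (‖c‖ + 1) := by gcongr; linarith
      _ ≤ 1 := by rw [← le_div_iff₀ (by positivity), one_div]; exact hm.le
  have hc' : ∀ j : ℕ, p ^ m * c ≠ p ^ j := fun j hj => hc (j - m) <| by
    rw [zpow_sub₀ hp0, zpow_natCast, zpow_natCast, ← hj]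
    field_simp
  have hmul := eq_zero_of_comp_mul_eq_of_norm_le_one hp0 hp hc1 hc' (G := fun u => u ^ m * G u)
    (by fun_prop) fun u hu => by simp only [h u hu]; ring
  exact fun u hu => (mul_eq_zero.mp (hmul u hu)).resolve_left (pow_ne_zero m hu)

lemma eq_zero_zpow_mul_of_comp_mul_eq (hp0 : p ≠ 0) {F m : ℂ → ℂ} (hm : ∀ u ≠ 0, m u ≠ 0)
    (hF : ∀ u ≠ 0, F (p * u) = m u * F u) {z : ℂ} (hz : z ≠ 0) (h0 : F z = 0) (k : ℤ) :
    F (p ^ k * z) = 0 := by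
  induction k using Int.induction_on with
  | zero => simpa using h0
  | succ k ih =>
    rw [zpow_add_one₀ hp0, mul_comm _ p, mul_assoc, hF _ (by positivity), ih, mul_zero]
  | pred k ih =>
    have h := hF (p ^ (-k - 1 : ℤ) * z) (mul_ne_zero (zpow_ne_zero _ hp0) hz)
    rwa [← mul_assoc, ← zpow_one_add₀ hp0, add_sub_cancel, ih, eq_comm,
      mul_eq_zero, or_iff_right (hm _ (mul_ne_zero (zpow_ne_zero _ hp0) hz))] at h

lemma exists_differentiableOn_eq_div {U : Set ℂ} (hU : IsOpen U) {F D : ℂ → ℂ}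
    (hF : DifferentiableOn ℂ F U) (hD : DifferentiableOn ℂ D U)
    (hzero : ∀ z ∈ U, D z = 0 → F z = 0 ∧ deriv D z ≠ 0) :
    ∃ G, DifferentiableOn ℂ G U ∧ ∀ u ∈ U, D u ≠ 0 → G u = F u / D u := by
  classical
  refine ⟨fun u => if D u = 0 then deriv F u / deriv D u else F u / D u, fun z hz => ?_,
    fun u _ hu => if_neg hu⟩
  have hUz := hU.mem_nhds hz
  refine DifferentiableAt.differentiableWithinAt ?_
  by_cases hDz : D z = 0
  · obtain ⟨hFz, hD'z⟩ := hzero z hz hDz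
    have hquot : DifferentiableAt ℂ (fun u => dslope F z u / dslope D z u) z :=
      (((differentiableOn_dslope hUz).mpr hF).differentiableAt hUz).div
        (((differentiableOn_dslope hUz).mpr hD).differentiableAt hUz) (by rwa [dslope_same])
    refine hquot.congr_of_eventuallyEq ?_
    have hne := eventually_nhdsWithin_iff.mp
      (((hD.differentiableAt hUz).hasDerivAt).eventually_ne (c := 0) hD'z)
    filter_upwards [hne] with u hu
    rcases eq_or_ne u z with rfl | huz
    · simp [hDz, dslope_same]
    · rw [if_neg (hu huz), dslope_of_ne _ huz, dslope_of_ne _ huz, slope_def_field,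
        slope_def_field, hFz, hDz, sub_zero, sub_zero,
        div_div_div_cancel_right₀ (sub_ne_zero.mpr huz)]
  · refine ((hF.differentiableAt hUz).div (hD.differentiableAt hUz) hDz).congr_of_eventuallyEq ?_
    filter_upwards [(hD.differentiableAt hUz).continuousAt.eventually_ne hDz] with u hu
    exact if_neg hu

lemma eq_zero_of_comp_mul_eq_of_simple_zeros (hp0 : p ≠ 0) (hp : ‖p‖ < 1) {c : ℂ} (hc0 : c ≠ 0)
    (hc : ∀ k : ℤ, c ≠ p ^ k) {F D m : ℂ → ℂ} (hF : DifferentiableOn ℂ F {0}ᶜ)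
    (hD : DifferentiableOn ℂ D {0}ᶜ) (hm : ∀ u ≠ 0, m u ≠ 0)
    (hFp : ∀ u ≠ 0, F (p * u) = m u * F u) (hDp : ∀ u ≠ 0, D (p * u) = c * m u * D u)
    (hzero : ∀ u ≠ 0, D u = 0 → F u = 0 ∧ deriv D u ≠ 0) {t : ℂ} (ht : t ≠ 0) (hDt : D t ≠ 0) :
    F t = 0 := by
  obtain ⟨G, hG, hGdiv⟩ := exists_differentiableOn_eq_div isOpen_compl_singleton hF hD hzero
  have hGp : ∀ u ≠ 0, G (p * u) = c⁻¹ * G u := by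
    have hpG : DifferentiableOn ℂ (fun u => G (p * u)) {0}ᶜ :=
      hG.comp (by fun_prop) fun u hu => mul_ne_zero hp0 hu
    refine fun u hu =>
      (hpG.analyticOnNhd isOpen_compl_singleton).eqOn_of_preconnected_of_eventuallyEq
        ((hG.const_mul _).analyticOnNhd isOpen_compl_singleton)
        (isConnected_compl_singleton_of_one_lt_rank (by simp) 0).isPreconnected ht ?_ hu
    filter_upwards [eventually_ne_nhds ht, (hD.differentiableAt
      (isOpen_ne.mem_nhds ht)).continuousAt.eventually_ne hDt] with v hv hDv
    have hDpv : D (p * v) ≠ 0 := by rw [hDp v hv]; exact mul_ne_zero (mul_ne_zero hc0 (hm v hv)) hDv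
    rw [hGdiv _ (mul_ne_zero hp0 hv) hDpv, hGdiv v hv hDv, hFp v hv, hDp v hv]
    field_simp [hm v hv]
  have hG0 := eq_zero_of_comp_mul_eq hp0 hp (c := c⁻¹) (fun k hk => hc (-k) (by
    rw [zpow_neg, ← hk, inv_inv])) hG hGp t ht
  rwa [hGdiv t ht hDt, div_eq_zero_iff, or_iff_left hDt] at hG0

section ThetaProd

variable {ι : Type*} [Fintype ι]

noncomputable def thetaProd (p : ℂ) (y : ι → ℂ) (u : ℂ) : ℂ := ∏ s, theta p (y s / u)

lemma prod_neg_div {K : Type*} [Field K] (y : ι → K) (z : K) :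
    ∏ s, -(y s / z) = (-z⁻¹) ^ Fintype.card ι * ∏ s, y s := by
  rw [← Finset.card_univ, ← prod_const, ← prod_mul_distrib]
  exact prod_congr rfl fun s _ => by ring

lemma prod_comp_update {α M : Type*} [CommMonoid M] [DecidableEq ι] (g : α → M) (y : ι → α)
    (i : ι) (v : α) :
    ∏ s, g (Function.update y i v s) = g v * ∏ s ∈ univ.erase i, g (y s) := by
  simp only [← Function.comp_apply (f := g), Function.comp_update,
    prod_update_of_mem (mem_univ i), sdiff_singleton_eq_erase]

lemma thetaProd_p_mul (hp : ‖p‖ < 1) (hp0 : p ≠ 0) {y : ι → ℂ} (hy : ∀ s, y s ≠ 0) {u : ℂ}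
    (hu : u ≠ 0) :
    thetaProd p y (p * u) = (-(p * u)⁻¹) ^ Fintype.card ι * (∏ s, y s) * thetaProd p y u := by
  rw [← prod_neg_div, thetaProd, thetaProd, ← prod_mul_distrib]
  refine prod_congr rfl fun s _ => ?_
  rw [mul_comm p u, ← div_div, theta_div_p hp hp0 (div_ne_zero (hy s) hu), div_div]

lemma thetaProd_eq_prod_theta_div (hp : ‖p‖ < 1) {y : ι → ℂ} (hy : ∀ s, y s ≠ 0) {x : ℂ}
    (hx : x ≠ 0) :
    thetaProd p y x = (-x⁻¹) ^ Fintype.card ι * (∏ s, y s) * ∏ s, theta p (x / y s) := by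
  rw [← prod_neg_div, thetaProd, ← prod_mul_distrib]
  refine prod_congr rfl fun s _ => ?_
  rw [← inv_div, theta_inv hp (div_ne_zero hx (hy s)), inv_div]

lemma thetaProd_update_mul [DecidableEq ι] (y : ι → ℂ) (i : ι) (v u : ℂ) :
    thetaProd p (Function.update y i v) u * theta p (y i / u) =
      theta p (v / u) * thetaProd p y u := by
  rw [thetaProd, thetaProd, prod_comp_update (fun x => theta p (x / u)),
    ← mul_prod_erase univ _ (mem_univ i)]
  ring

lemma differentiableAt_thetaProd (hp : ‖p‖ < 1) {y : ι → ℂ} (hy : ∀ s, y s ≠ 0) {u : ℂ}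
    (hu : u ≠ 0) : DifferentiableAt ℂ (thetaProd p y) u :=
  DifferentiableAt.fun_finsetProd fun s _ => differentiableAt_theta_div hp (hy s) hu

lemma exists_zpow_of_thetaProd_eq_zero (hp : ‖p‖ < 1) (hp0 : p ≠ 0) {y : ι → ℂ}
    (hy : ∀ s, y s ≠ 0) {u : ℂ} (hu : u ≠ 0) (h : thetaProd p y u = 0) :
    ∃ i, ∃ k : ℤ, y i / u = p ^ k := by
  obtain ⟨i, -, hi⟩ := prod_eq_zero_iff.mp h
  by_contra! hne
  exact theta_ne_zero hp hp0 (div_ne_zero (hy i) hu) (hne i) hi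

lemma deriv_thetaProd_ne_zero [DecidableEq ι] (hp : ‖p‖ < 1) (hp0 : p ≠ 0) {y : ι → ℂ}
    (hy : ∀ s, y s ≠ 0) (hyy : ∀ i s, i ≠ s → ∀ k : ℤ, y i / y s ≠ p ^ k) {u : ℂ} (hu : u ≠ 0)
    {i : ι} {k : ℤ} (hk : y i / u = p ^ k) : deriv (thetaProd p y) u ≠ 0 := by
  have hsplit :
      thetaProd p y = fun v => theta p (y i / v) * ∏ s ∈ univ.erase i, theta p (y s / v) :=
    funext fun v => (mul_prod_erase _ _ (mem_univ i)).symm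
  have hfactor : HasDerivAt (fun v => theta p (y i / v))
      (deriv (theta p) (p ^ k) * (y i * -(u ^ 2)⁻¹)) u := by
    rw [← hk]
    exact (differentiableAt_theta hp (div_ne_zero (hy i) hu)).hasDerivAt.comp u
      ((hasDerivAt_inv hu).const_mul (y i))
  have hrest : DifferentiableAt ℂ (fun v => ∏ s ∈ univ.erase i, theta p (y s / v)) u :=
    DifferentiableAt.fun_finsetProd fun s _ => differentiableAt_theta_div hp (hy s) hu
  have hrest0 : ∏ s ∈ univ.erase i, theta p (y s / u) ≠ 0 := by
    refine prod_ne_zero_iff.mpr fun s hs => theta_ne_zero hp hp0 (div_ne_zero (hy s) hu) ?_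
    intro j hj
    refine hyy s i (ne_of_mem_erase hs) (j - k) ?_
    rw [zpow_sub₀ hp0, ← hj, ← hk]
    field_simp
  rw [hsplit, (hfactor.fun_mul hrest.hasDerivAt).deriv, hk, theta_zpow_eq_zero hp0, zero_mul,
    add_zero]
  exact mul_ne_zero (mul_ne_zero (deriv_theta_zpow_ne_zero hp hp0 k)
    (mul_ne_zero (hy i) (neg_ne_zero.mpr (inv_ne_zero (pow_ne_zero 2 hu))))) hrest0

end ThetaProd

section PartialFraction

variable {ι : Type*} [DecidableEq ι] {a b : ι → ℂ} {c : ℂ}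

lemma update_div_ne_zero (ha : ∀ s, a s ≠ 0) (hc0 : c ≠ 0) (i : ι) :
    ∀ s, Function.update a i (a i / c) s ≠ 0 :=
  (Function.forall_update_iff a fun _ y => y ≠ 0).mpr ⟨div_ne_zero (ha i) hc0, fun s _ => ha s⟩

variable [Fintype ι]

noncomputable def pfCoeff (p : ℂ) (a b : ι → ℂ) (i : ι) : ℂ :=
  (∏ s, theta p (a i / b s)) / ∏ s ∈ univ.erase i, theta p (a i / a s)

/-- The `i`-th term `θ_p(a_i/(cu)) ∏_{s≠i} θ_p(a_s/u)` is encoded as a `thetaProd` with `a_i`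
replaced by `a_i/c`: under the balancing condition every term then has parameter product `∏ b`,
hence the same multiplier under `u ↦ pu`. -/
noncomputable def pfDefect (p : ℂ) (a b : ι → ℂ) (c u : ℂ) : ℂ :=
  theta p c * thetaProd p b u -
    ∑ i, pfCoeff p a b i * thetaProd p (Function.update a i (a i / c)) u

lemma prod_update_div (hbal : ∏ s, a s = c * ∏ s, b s) (hc0 : c ≠ 0) (i : ι) :
    ∏ s, Function.update a i (a i / c) s = ∏ s, b s := by
  rw [prod_update_of_mem (mem_univ i), sdiff_singleton_eq_erase, ← mul_div_right_comm,
    mul_prod_erase _ _ (mem_univ i), hbal, mul_div_cancel_left₀ _ hc0]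

lemma differentiableOn_pfDefect (hp : ‖p‖ < 1) (ha : ∀ s, a s ≠ 0) (hb : ∀ s, b s ≠ 0)
    (hc0 : c ≠ 0) : DifferentiableOn ℂ (pfDefect p a b c) {0}ᶜ := by
  intro u hu
  refine DifferentiableAt.differentiableWithinAt ?_
  exact ((differentiableAt_thetaProd hp hb hu).const_mul _).sub (DifferentiableAt.fun_sum fun i _ =>
    (differentiableAt_thetaProd hp (update_div_ne_zero ha hc0 i) hu).const_mul _)

lemma pfDefect_p_mul (hp : ‖p‖ < 1) (hp0 : p ≠ 0) (ha : ∀ s, a s ≠ 0) (hb : ∀ s, b s ≠ 0)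
    (hc0 : c ≠ 0) (hbal : ∏ s, a s = c * ∏ s, b s) {u : ℂ} (hu : u ≠ 0) :
    pfDefect p a b c (p * u) =
      (-(p * u)⁻¹) ^ Fintype.card ι * (∏ s, b s) * pfDefect p a b c u := by
  simp only [pfDefect, thetaProd_p_mul hp hp0 hb hu,
    thetaProd_p_mul hp hp0 (update_div_ne_zero ha hc0 _) hu, prod_update_div hbal hc0, mul_sub,
    mul_sum]
  congr 1
  · ring
  · exact sum_congr rfl fun i _ => by ring

lemma pfDefect_apply_self (hp : ‖p‖ < 1) (hp0 : p ≠ 0) (ha : ∀ s, a s ≠ 0) (hb : ∀ s, b s ≠ 0)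
    (hc0 : c ≠ 0) (hbal : ∏ s, a s = c * ∏ s, b s)
    (haa : ∀ i s, i ≠ s → ∀ k : ℤ, a i / a s ≠ p ^ k) (i : ι) : pfDefect p a b c (a i) = 0 := by
  have hself : ∀ j ≠ i, thetaProd p (Function.update a j (a j / c)) (a i) = 0 := fun j hj =>
    prod_eq_zero (mem_univ i) (by
      rw [Function.update_of_ne hj.symm, div_self (ha i)]
      simpa using theta_zpow_eq_zero hp0 0)
  have hR : ∏ s ∈ univ.erase i, theta p (a i / a s) ≠ 0 := prod_ne_zero_iff.mpr fun s hs =>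
    theta_ne_zero hp hp0 (div_ne_zero (ha i) (ha s)) (haa i s (ne_of_mem_erase hs).symm)
  rw [pfDefect, sub_eq_zero, sum_eq_single i (fun j _ hj => by rw [hself j hj, mul_zero])
    (fun h => absurd (mem_univ i) h), thetaProd_eq_prod_theta_div hp hb (ha i),
    thetaProd_eq_prod_theta_div hp (update_div_ne_zero ha hc0 i) (ha i), prod_update_div hbal hc0,
    prod_comp_update (fun y => theta p (a i / y)), div_div_cancel₀ (ha i), pfCoeff]
  field_simp

lemma pfDefect_eq_mul_sub {u : ℂ} (hθa : ∀ s, theta p (a s / u) ≠ 0) (hθc : theta p c ≠ 0) :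
    pfDefect p a b c u = theta p c * thetaProd p a u *
      (∏ s, theta p (b s / u) / theta p (a s / u) - 1 / theta p c *
        ∑ i, theta p (a i / (c * u)) / theta p (a i / u) * (∏ s, theta p (a i / b s)) /
          ∏ s ∈ univ.erase i, theta p (a i / a s)) := by
  have hupd : ∀ i, thetaProd p (Function.update a i (a i / c)) u =
      theta p (a i / (c * u)) / theta p (a i / u) * thetaProd p a u := fun i => by
    rw [div_mul_eq_mul_div, eq_div_iff (hθa i), thetaProd_update_mul, div_div]
  have hD : thetaProd p a u ≠ 0 := prod_ne_zero_iff.mpr fun s _ => hθa s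
  rw [pfDefect, prod_div_distrib, ← thetaProd, ← thetaProd, mul_sub, mul_sum, mul_sum]
  congr 1
  · field_simp
  · exact sum_congr rfl fun i _ => by rw [hupd, pfCoeff]; field_simp

lemma pfDefect_eq_zero (hp : ‖p‖ < 1) (hp0 : p ≠ 0) (ha : ∀ s, a s ≠ 0) (hb : ∀ s, b s ≠ 0)
    (hc0 : c ≠ 0) (hc : ∀ k : ℤ, c ≠ p ^ k) (hbal : ∏ s, a s = c * ∏ s, b s)
    (haa : ∀ i s, i ≠ s → ∀ k : ℤ, a i / a s ≠ p ^ k) {t : ℂ} (ht : t ≠ 0)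
    (hDt : thetaProd p a t ≠ 0) : pfDefect p a b c t = 0 := by
  have hm : ∀ u ≠ 0, (-(p * u)⁻¹) ^ Fintype.card ι * ∏ s, b s ≠ 0 := fun u hu =>
    mul_ne_zero (by simp [hp0, hu]) (prod_ne_zero_iff.mpr fun s _ => hb s)
  have hFp := fun u (hu : u ≠ 0) => pfDefect_p_mul hp hp0 ha hb hc0 hbal hu
  have hzero : ∀ u ≠ 0, thetaProd p a u = 0 →
      pfDefect p a b c u = 0 ∧ deriv (thetaProd p a) u ≠ 0 := by
    intro u hu h
    obtain ⟨i, k, hk⟩ := exists_zpow_of_thetaProd_eq_zero hp hp0 ha hu h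
    refine ⟨?_, deriv_thetaProd_ne_zero hp hp0 ha haa hu hk⟩
    rw [show u = p ^ (-k) * a i by rw [zpow_neg, ← hk, inv_div, div_mul_cancel₀ _ (ha i)]]
    exact eq_zero_zpow_mul_of_comp_mul_eq hp0 hm hFp (ha i)
      (pfDefect_apply_self hp hp0 ha hb hc0 hbal haa i) (-k)
  exact eq_zero_of_comp_mul_eq_of_simple_zeros hp0 hp hc0 hc
    (differentiableOn_pfDefect hp ha hb hc0)
    (fun u hu => (differentiableAt_thetaProd hp ha hu).differentiableWithinAt) hm hFp
    (fun u hu => by rw [thetaProd_p_mul hp hp0 ha hu, hbal]; ring) hzero ht hDt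

end PartialFraction

end

theorem elliptic_partial_fraction_general (p : ℂ) (hp0 : 0 < ‖p‖)
    (hp1 : ‖p‖ < 1) (n : ℕ)
    (a : Fin n → ℂ) (b : Fin (n + 1) → ℂ) (t : ℂ)
    (ha : ∀ i, a i ≠ 0) (hb : ∀ j, b j ≠ 0) (ht : t ≠ 0)
    (hbal : (∏ i, a i) * t = ∏ j, b j)
    (hat : ∀ i, ∀ k : ℤ, a i / t ≠ p ^ k)
    (haa : ∀ i s, i ≠ s → ∀ k : ℤ, a i / a s ≠ p ^ k)
    (hbt : ∀ k : ℤ, b (Fin.last n) / t ≠ p ^ k) :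
    ∏ s : Fin n, theta p (b s.castSucc / t) / theta p (a s / t)
      = (1 / theta p (b (Fin.last n) / t)) *
        ∑ i : Fin n, theta p (a i / b (Fin.last n)) / theta p (a i / t) *
          (∏ s : Fin n, theta p (a i / b s.castSucc)) /
          (∏ s ∈ Finset.univ.erase i, theta p (a i / a s)) := by
  have hp0' : p ≠ 0 := norm_pos_iff.mp hp0
  set c := b (Fin.last n) / t
  have hc0 : c ≠ 0 := div_ne_zero (hb _) ht
  have hct : c * t = b (Fin.last n) := div_mul_cancel₀ _ ht
  have hbal' : ∏ s, a s = c * ∏ s : Fin n, b s.castSucc := by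
    rw [← mul_left_inj' ht, hbal, Fin.prod_univ_castSucc, ← hct]
    ring
  have hθa : ∀ s, theta p (a s / t) ≠ 0 := fun s =>
    theta_ne_zero hp1 hp0' (div_ne_zero (ha s) ht) (hat s)
  have hθc : theta p c ≠ 0 := theta_ne_zero hp1 hp0' hc0 hbt
  have hF := pfDefect_eq_zero (b := fun s : Fin n => b s.castSucc) hp1 hp0' ha (fun s => hb _)
    hc0 hbt hbal' haa ht (prod_ne_zero_iff.mpr fun s _ => hθa s)
  rw [pfDefect_eq_mul_sub hθa hθc, hct, mul_eq_zero, sub_eq_zero] at hF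
  exact hF.resolve_left (mul_ne_zero hθc (prod_ne_zero_iff.mpr fun s _ => hθa s))

/-- Elliptic partial fraction expansion (Rosengren): for `0 < |p| < 1`, `n ≥ 1`,
nonzero `a₁,…,a_n`, `b₁,…,b_{n+1}`, `t` with `a₁⋯a_n · t = b₁⋯b_{n+1}` and the
generic-position assumptions, one has
`∏_s θ_p(b_s/t)/θ_p(a_s/t)
 = θ_p(b_{n+1}/t)⁻¹ ∑_i θ_p(a_i/b_{n+1})/θ_p(a_i/t) · ∏_s θ_p(a_i/b_s) / ∏_{s≠i} θ_p(a_i/a_s)`. -/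
theorem elliptic_partial_fraction (p : ℂ) (hp0 : 0 < ‖p‖)
    (hp1 : ‖p‖ < 1) (n : ℕ) (hn : 1 ≤ n)
    (a : Fin n → ℂ) (b : Fin (n + 1) → ℂ) (t : ℂ)
    (ha : ∀ i, a i ≠ 0) (hb : ∀ j, b j ≠ 0) (ht : t ≠ 0)
    (hbal : (∏ i, a i) * t = ∏ j, b j)
    (hat : ∀ i, ∀ k : ℤ, a i / t ≠ p ^ k)
    (haa : ∀ i s, i ≠ s → ∀ k : ℤ, a i / a s ≠ p ^ k)
    (hbt : ∀ k : ℤ, b (Fin.last n) / t ≠ p ^ k) :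
    ∏ s : Fin n, theta p (b s.castSucc / t) / theta p (a s / t)
      = (1 / theta p (b (Fin.last n) / t)) *
        ∑ i : Fin n, theta p (a i / b (Fin.last n)) / theta p (a i / t) *
          (∏ s : Fin n, theta p (a i / b s.castSucc)) /
          (∏ s ∈ Finset.univ.erase i, theta p (a i / a s)) :=
  elliptic_partial_fraction_general p hp0 hp1 n a b t ha hb ht hbal hat haa hbt
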